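/- Let X, Y ∈ ℝ^{n×d} with n ≥ d satisfy XᵀX = YᵀY = I_d, and suppose XᵀY is invertible. Let O = 𝒫(XᵀY) be the polar factor of XᵀY. Then ‖Y − X·O‖ ≤ 2·‖(I_n − X·Xᵀ)·Y‖, where ‖·‖ is the operator norm. -/

import Mathlib

set_option maxHeartbeats 1000000

open Matrix

noncomputable def opNorm {m n : Type*} [Fintype m] [Fintype n] [DecidableEq n]
    (M : Matrix m n ℝ) : ℝ :=
  ‖(Matrix.toEuclideanLin M).toContinuousLinearMap‖

noncomputable def singularValues {m n : Type*} [Fintype m] [Fintype n] [DecidableEq n]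
    (X : Matrix m n ℝ) : n → ℝ :=
  fun i => Real.sqrt ((show (Xᵀ * X).IsHermitian by simpa [Matrix.conjTranspose_eq_transpose_of_trivial] using Matrix.isHermitian_conjTranspose_mul_self X).eigenvalues i)

noncomputable def svalsDesc {m k : ℕ} (X : Matrix (Fin m) (Fin k) ℝ) : Fin k → ℝ :=
  fun i => (singularValues X ∘ Tuple.sort (singularValues X)) i.rev

noncomputable def eigDesc {n : ℕ} {M : Matrix (Fin n) (Fin n) ℝ} (hM : M.IsHermitian) : Fin n → ℝ :=
  fun i => (hM.eigenvalues ∘ Tuple.sort hM.eigenvalues) i.rev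

noncomputable def frobNorm {d : ℕ} (M : Matrix (Fin d) (Fin d) ℝ) : ℝ :=
  Real.sqrt (Matrix.trace (Mᵀ * M))

def blockRow {n d r : Type*} (M : Matrix (n × d) r ℝ) (i : n) : Matrix d r ℝ :=
  Matrix.of fun a j => M (i, a) j

open scoped Matrix.Norms.L2Operator InnerProductSpace

section Aux

variable {d : ℕ}

lemma opNorm_eq_l2 {a b : Type*} [Fintype a] [Fintype b] [DecidableEq b] (M : Matrix a b ℝ) :
    opNorm M = ‖M‖ := rfl

lemma inner_CLM (A : Matrix (Fin d) (Fin d) ℝ) (x y : EuclideanSpace ℝ (Fin d)) :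
    ⟪x, toEuclideanCLM (𝕜 := ℝ) A y⟫_ℝ
      = dotProduct (WithLp.equiv 2 _ x) (A *ᵥ (WithLp.equiv 2 _ y)) := by
  exact inner_toEuclideanCLM A x y

lemma inner_self_eq_dot (x : Fin d → ℝ) :
    ⟪(WithLp.equiv 2 (Fin d → ℝ)).symm x, (WithLp.equiv 2 (Fin d → ℝ)).symm x⟫_ℝ
      = dotProduct x x := by
  simp only [PiLp.inner_apply, RCLike.inner_apply, conj_trivial, dotProduct]
  rfl

lemma psd_inner_nonneg {A : Matrix (Fin d) (Fin d) ℝ} (hA : A.PosSemidef)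
    (x : EuclideanSpace ℝ (Fin d)) : 0 ≤ ⟪x, toEuclideanCLM (𝕜 := ℝ) A x⟫_ℝ := by
  rw [inner_CLM]
  simpa using hA.dotProduct_mulVec_nonneg (WithLp.equiv 2 _ x)

lemma sym_inner {A : Matrix (Fin d) (Fin d) ℝ} (hA : A.IsHermitian)
    (x y : EuclideanSpace ℝ (Fin d)) :
    ⟪toEuclideanCLM (𝕜 := ℝ) A x, y⟫_ℝ = ⟪x, toEuclideanCLM (𝕜 := ℝ) A y⟫_ℝ := by
  have hs := Matrix.isHermitian_iff_isSymmetric.mp hA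
  have ex : toEuclideanCLM (𝕜 := ℝ) A x = Matrix.toEuclideanLin A x :=
    LinearMap.congr_fun (coe_toEuclideanCLM_eq_toEuclideanLin A) x
  have ey : toEuclideanCLM (𝕜 := ℝ) A y = Matrix.toEuclideanLin A y :=
    LinearMap.congr_fun (coe_toEuclideanCLM_eq_toEuclideanLin A) y
  rw [ex, ey]
  exact hs x y

lemma cs_psd {A : Matrix (Fin d) (Fin d) ℝ} (hA : A.PosSemidef)
    (x y : EuclideanSpace ℝ (Fin d)) :
    ⟪x, toEuclideanCLM (𝕜 := ℝ) A y⟫_ℝ ^ 2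
      ≤ ⟪x, toEuclideanCLM (𝕜 := ℝ) A x⟫_ℝ * ⟪y, toEuclideanCLM (𝕜 := ℝ) A y⟫_ℝ := by
  set T := toEuclideanCLM (𝕜 := ℝ) A with hT
  have key : ∀ t : ℝ,
      0 ≤ ⟪y, T y⟫_ℝ * (t * t) + (2 * ⟪x, T y⟫_ℝ) * t + ⟪x, T x⟫_ℝ := by
    intro t
    have h0 := psd_inner_nonneg hA (x + t • y)
    have hsym : ⟪y, T x⟫_ℝ = ⟪x, T y⟫_ℝ := by
      rw [← sym_inner hA.isHermitian x y, real_inner_comm]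
    simp only [map_add, _root_.map_smul, inner_add_left, inner_add_right,
      real_inner_smul_left, real_inner_smul_right, ← hT] at h0
    rw [hsym] at h0
    nlinarith [h0]
  have hd := discrim_le_zero key
  rw [discrim] at hd
  nlinarith [hd]

lemma norm_mono {A B : Matrix (Fin d) (Fin d) ℝ} (hA : A.PosSemidef)
    (hBA : (B - A).PosSemidef) : ‖A‖ ≤ ‖B‖ := by
  set T := toEuclideanCLM (𝕜 := ℝ) A with hT
  have hAT : ‖A‖ = ‖T‖ := cstar_norm_def A
  have hBnn : (0:ℝ) ≤ ‖B‖ := norm_nonneg _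
  have hTnn : (0:ℝ) ≤ ‖T‖ := norm_nonneg _
  have hQle : ∀ x : EuclideanSpace ℝ (Fin d), ⟪x, T x⟫_ℝ ≤ ‖B‖ * ‖x‖ ^ 2 := by
    intro x
    have h1 := psd_inner_nonneg hBA x
    have hmap : toEuclideanCLM (𝕜 := ℝ) (B - A) = toEuclideanCLM (𝕜 := ℝ) B - T := by
      simp [hT]
    rw [hmap] at h1
    simp only [ContinuousLinearMap.sub_apply, inner_sub_right] at h1
    have h2 : ⟪x, toEuclideanCLM (𝕜 := ℝ) B x⟫_ℝ ≤ ‖B‖ * ‖x‖ ^ 2 := by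
      calc ⟪x, toEuclideanCLM (𝕜 := ℝ) B x⟫_ℝ
          ≤ ‖x‖ * ‖toEuclideanCLM (𝕜 := ℝ) B x‖ := real_inner_le_norm _ _
        _ ≤ ‖x‖ * (‖toEuclideanCLM (𝕜 := ℝ) B‖ * ‖x‖) := by
            gcongr; exact (toEuclideanCLM (𝕜 := ℝ) B).le_opNorm x
        _ = ‖toEuclideanCLM (𝕜 := ℝ) B‖ * ‖x‖ ^ 2 := by ring
        _ = ‖B‖ * ‖x‖ ^ 2 := by rw [← cstar_norm_def]
    linarith
  have key : ∀ x : EuclideanSpace ℝ (Fin d), ‖T x‖ ^ 2 ≤ ‖T‖ * ‖B‖ * ‖x‖ ^ 2 := by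
    intro x
    have hcs := cs_psd hA (T x) x
    have e1 : ⟪T x, T x⟫_ℝ = ‖T x‖ ^ 2 := real_inner_self_eq_norm_sq _
    have e2 : ⟪T x, T (T x)⟫_ℝ ≤ ‖T‖ * ‖T x‖ ^ 2 := by
      calc ⟪T x, T (T x)⟫_ℝ ≤ ‖T x‖ * ‖T (T x)‖ := real_inner_le_norm _ _
        _ ≤ ‖T x‖ * (‖T‖ * ‖T x‖) := by gcongr; exact T.le_opNorm _
        _ = ‖T‖ * ‖T x‖ ^ 2 := by ring
    have e3 := hQle x
    have e0 := psd_inner_nonneg hA x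
    rcases eq_or_lt_of_le (norm_nonneg (T x)) with h | h
    · have hz : ‖T x‖ ^ 2 = 0 := by rw [← h]; norm_num
      rw [hz]
      exact mul_nonneg (mul_nonneg hTnn hBnn) (sq_nonneg _)
    · have hmul : ⟪T x, T (T x)⟫_ℝ * ⟪x, T x⟫_ℝ
          ≤ (‖T‖ * ‖T x‖ ^ 2) * (‖B‖ * ‖x‖ ^ 2) := by
        have e2' : (0:ℝ) ≤ ⟪T x, T (T x)⟫_ℝ := psd_inner_nonneg hA (T x)
        exact mul_le_mul e2 e3 e0 (by positivity)
      have h4 : (‖T x‖ ^ 2) ^ 2 ≤ (‖T‖ * ‖B‖ * ‖x‖ ^ 2) * ‖T x‖ ^ 2 := by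
        rw [← e1] at *
        nlinarith [hcs]
      have := le_of_mul_le_mul_right
        (by linarith [h4] :
          ‖T x‖ ^ 2 * ‖T x‖ ^ 2 ≤ (‖T‖ * ‖B‖ * ‖x‖ ^ 2) * ‖T x‖ ^ 2)
        (pow_pos h 2)
      linarith
  have hTle : ‖T‖ ≤ Real.sqrt (‖T‖ * ‖B‖) := by
    refine ContinuousLinearMap.opNorm_le_bound _ (Real.sqrt_nonneg _) fun x => ?_
    have h2 : ‖T x‖ ^ 2 ≤ (Real.sqrt (‖T‖ * ‖B‖) * ‖x‖) ^ 2 := by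
      rw [mul_pow, Real.sq_sqrt (by positivity)]
      exact key x
    exact le_of_pow_le_pow_left₀ two_ne_zero (by positivity) h2
  rw [hAT]
  rcases eq_or_lt_of_le hTnn with h0 | h0
  · rw [← h0]; exact hBnn
  · have h1 : ‖T‖ ^ 2 ≤ ‖T‖ * ‖B‖ := by
      have := pow_le_pow_left₀ hTnn hTle 2
      rwa [Real.sq_sqrt (by positivity)] at this
    nlinarith

end Aux

theorem subspace_error_to_projection (n d : ℕ) (hdn : d ≤ n)
    (X Y : Matrix (Fin n) (Fin d) ℝ)
    (hX : Xᵀ * X = 1) (hY : Yᵀ * Y = 1)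
    (hinv : IsUnit (Xᵀ * Y))
    (O W : Matrix (Fin d) (Fin d) ℝ)
    (hO : Oᵀ * O = 1) (hW : W.PosDef) (hpolar : Xᵀ * Y = O * W) :
    opNorm (Y - X * O) ≤ 2 * opNorm ((1 - X * Xᵀ) * Y) := by
  have hXc : Xᴴ * X = 1 := by rw [conjTranspose_eq_transpose_of_trivial]; exact hX
  have hYc : Yᴴ * Y = 1 := by rw [conjTranspose_eq_transpose_of_trivial]; exact hY
  have hOc : Oᴴ * O = 1 := by rw [conjTranspose_eq_transpose_of_trivial]; exact hO
  have hpc : Xᴴ * Y = O * W := by rw [conjTranspose_eq_transpose_of_trivial]; exact hpolar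
  have hWH : Wᴴ = W := hW.1
  have hYX : Yᴴ * X = W * Oᴴ := by
    have h := congrArg conjTranspose hpc
    rw [conjTranspose_mul, conjTranspose_mul, hWH, conjTranspose_conjTranspose] at h
    exact h
  set E : Matrix (Fin n) (Fin d) ℝ := (1 - X * Xᵀ) * Y with hEdef
  set D : Matrix (Fin n) (Fin d) ℝ := Y - X * O with hDdef
  have hE1 : E = Y - X * (O * W) := by
    rw [hEdef, Matrix.sub_mul, Matrix.one_mul, Matrix.mul_assoc, hpolar]
  -- products
  have htail : (W * Oᴴ) * (O * W) = W * W := by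
    rw [Matrix.mul_assoc, ← Matrix.mul_assoc Oᴴ, hOc, Matrix.one_mul]
  have h1 : Yᴴ * (X * (O * W)) = W * W := by
    rw [← Matrix.mul_assoc, hYX, htail]
  have h2 : (X * (O * W))ᴴ * Y = W * W := by
    rw [conjTranspose_mul, conjTranspose_mul, hWH, Matrix.mul_assoc, hpc, htail]
  have h3 : (X * (O * W))ᴴ * (X * (O * W)) = W * W := by
    rw [conjTranspose_mul, conjTranspose_mul, hWH, Matrix.mul_assoc (W * Oᴴ),
      ← Matrix.mul_assoc Xᴴ, hXc, Matrix.one_mul, htail]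
  have hEE : Eᴴ * E = 1 - W * W := by
    rw [hE1, conjTranspose_sub, Matrix.sub_mul, Matrix.mul_sub, Matrix.mul_sub,
      hYc, h1, h2, h3]
    abel
  have h4 : Yᴴ * (X * O) = W := by
    rw [← Matrix.mul_assoc, hYX, Matrix.mul_assoc, hOc, Matrix.mul_one]
  have h5 : (X * O)ᴴ * Y = W := by
    rw [conjTranspose_mul, Matrix.mul_assoc, hpc, ← Matrix.mul_assoc, hOc, Matrix.one_mul]
  have h6 : (X * O)ᴴ * (X * O) = 1 := by
    rw [conjTranspose_mul, Matrix.mul_assoc, ← Matrix.mul_assoc Xᴴ, hXc, Matrix.one_mul, hOc]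
  have hDD : Dᴴ * D = (1 - W) + (1 - W) := by
    rw [hDdef, conjTranspose_sub, Matrix.sub_mul, Matrix.mul_sub, Matrix.mul_sub,
      hYc, h4, h5, h6]
    abel
  -- positive semidefiniteness facts
  have pEE : (1 - W * W).PosSemidef := hEE ▸ posSemidef_conjTranspose_mul_self E
  have pW2 : (W * W).PosSemidef := by
    have h := posSemidef_conjTranspose_mul_self W
    rwa [hWH] at h
  have hone : ‖(1 : Matrix (Fin d) (Fin d) ℝ)‖ ≤ 1 := by
    rw [cstar_norm_def, _root_.map_one, ContinuousLinearMap.one_def]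
    exact ContinuousLinearMap.norm_id_le
  have hWW1 : ‖W * W‖ ≤ 1 := le_trans (norm_mono pW2 pEE) hone
  have hWnorm : ‖W‖ ≤ 1 := by
    have h := Matrix.l2_opNorm_conjTranspose_mul_self W
    rw [hWH] at h
    nlinarith [norm_nonneg W]
  have p1W : (1 - W).PosSemidef := by
    refine posSemidef_iff_dotProduct_mulVec.mpr ⟨?_, fun x => ?_⟩
    · rw [Matrix.IsHermitian, conjTranspose_sub, conjTranspose_one, hWH]
    · have hsx : star x = x := by simp
      rw [hsx, sub_mulVec, one_mulVec, dotProduct_sub]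
      set x' : EuclideanSpace ℝ (Fin d) := (WithLp.equiv 2 (Fin d → ℝ)).symm x with hx'
      have hinner : ⟪x', toEuclideanCLM (𝕜 := ℝ) W x'⟫_ℝ = dotProduct x (W *ᵥ x) := by
        rw [inner_CLM]
        rfl
      have hxx : ⟪x', x'⟫_ℝ = dotProduct x x := inner_self_eq_dot x
      have hnx : ⟪x', x'⟫_ℝ = ‖x'‖ ^ 2 := real_inner_self_eq_norm_sq _
      have hb : ⟪x', toEuclideanCLM (𝕜 := ℝ) W x'⟫_ℝ ≤ ‖x'‖ ^ 2 := by
        calc ⟪x', toEuclideanCLM (𝕜 := ℝ) W x'⟫_ℝ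
            ≤ ‖x'‖ * ‖toEuclideanCLM (𝕜 := ℝ) W x'‖ := real_inner_le_norm _ _
          _ ≤ ‖x'‖ * (‖toEuclideanCLM (𝕜 := ℝ) W‖ * ‖x'‖) := by
              gcongr; exact (toEuclideanCLM (𝕜 := ℝ) W).le_opNorm x'
          _ = ‖toEuclideanCLM (𝕜 := ℝ) W‖ * ‖x'‖ ^ 2 := by ring
          _ = ‖W‖ * ‖x'‖ ^ 2 := by rw [← cstar_norm_def]
          _ ≤ 1 * ‖x'‖ ^ 2 := by gcongr
          _ = ‖x'‖ ^ 2 := one_mul _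
      have : dotProduct x (W *ᵥ x) ≤ dotProduct x x := by
        rw [← hinner, ← hxx, hnx]
        exact hb
      linarith
  -- W - W * W is psd via sqrt
  have hWps := hW.posSemidef
  obtain ⟨S, hSsa, -, hSS'⟩ := open scoped MatrixOrder in
    CFC.exists_sqrt_of_isSelfAdjoint_of_quasispectrumRestricts hWps.isHermitian
      (QuasispectrumRestricts.nnreal_of_nonneg hWps.nonneg)
  have hSS : S * S = W := hSS'
  have hSH : Sᴴ = S := hSsa
  have hSWS : S * W * S = W * W := by
    calc S * W * S
        = S * (S * S) * S := by rw [hSS]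
      _ = (S * S) * (S * S) := by
          simp only [Matrix.mul_assoc]
      _ = W * W := by rw [hSS]
  have keyS : S * (1 - W) * Sᴴ = W - W * W := by
    rw [hSH, Matrix.mul_sub, Matrix.mul_one, Matrix.sub_mul, hSS, hSWS]
  have pWW2 : (W - W * W).PosSemidef := keyS ▸ p1W.mul_mul_conjTranspose_same S
  have h1W : ‖1 - W‖ ≤ ‖1 - W * W‖ := by
    refine norm_mono p1W ?_
    have e : (1 - W * W) - (1 - W) = W - W * W := by abel
    rw [e]
    exact pWW2
  -- final norm chain
  have ha : ‖D‖ * ‖D‖ ≤ 2 * ‖1 - W‖ := by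
    have h := Matrix.l2_opNorm_conjTranspose_mul_self D
    rw [hDD] at h
    calc ‖D‖ * ‖D‖ = ‖(1 - W) + (1 - W)‖ := h.symm
      _ ≤ ‖1 - W‖ + ‖1 - W‖ := norm_add_le _ _
      _ = 2 * ‖1 - W‖ := by ring
  have hb : ‖1 - W * W‖ = ‖E‖ * ‖E‖ := by
    rw [← hEE, Matrix.l2_opNorm_conjTranspose_mul_self]
  have final : ‖D‖ * ‖D‖ ≤ 2 * (‖E‖ * ‖E‖) := by
    calc ‖D‖ * ‖D‖ ≤ 2 * ‖1 - W‖ := ha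
      _ ≤ 2 * ‖1 - W * W‖ := by linarith [h1W]
      _ = 2 * (‖E‖ * ‖E‖) := by rw [hb]
  rw [opNorm_eq_l2, opNorm_eq_l2]
  nlinarith [final, norm_nonneg D, norm_nonneg E, sq_nonneg (‖D‖ - 2 * ‖E‖), sq_nonneg (‖D‖ + 2 * ‖E‖)]
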